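/- arXiv:2208.06463 — 2 statements merged into one kernel-verified Lean document; each statement's English description precedes it below -/
import Mathlib

section
/- Suppose x lies in the T-period-n part of f × g × w and w^T(x, n) > 1. Then for every r ∈ ℕ, R_{nq+r}(x) converges to R_n(T^r x) as q → ∞. -/
open Finset Filter

noncomputable def cocycle {X : Type*} (T : X → X) (w : X → ℝ) (x : X) (k : ℕ) : ℝ :=
  ∏ j ∈ Finset.range k, w (T^[j] x)

noncomputable def wSum {X : Type*} (T : X → X) (w : X → ℝ) (h : X → ℝ) (n : ℕ) (x : X) : ℝ :=
  ∑ k ∈ Finset.range n, h (T^[k] x) * cocycle T w x k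

noncomputable def ratio {X : Type*} (T : X → X) (w f g : X → ℝ) (n : ℕ) (x : X) : ℝ :=
  wSum T w f n x / wSum T w g n x

def InPeriodPart {X Y : Type*} (T : X → X) (h : X → Y) (n : ℕ) (x : X) : Prop :=
  ∀ k : ℕ, h (T^[k] x) = h (T^[n] (T^[k] x))

/-!
Put `c = w^T(x, n) > 1`. Periodicity makes `a_q = S_h^{nq+r}(x)` satisfy the affine recurrence
`a_{q+1} = S_h^n(x) + c a_q`, so `a_q / c^q` converges to `S_h^r(x) + S_h^n(x) / (c - 1)`, which the
cocycle identity rewrites as `w^T(x, r) S_h^n(T^r x) / (c - 1)`. Dividing the limits for `h = f` and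
`h = g` cancels the common factor `w^T(x, r) / (c - 1)`.
-/

theorem tendsto_div_pow_of_affine_recurrence {a : ℕ → ℝ} {b c : ℝ} (hc : 1 < c)
    (ha : ∀ q, a (q + 1) = b + c * a q) :
    Tendsto (fun q => a q / c ^ q) atTop (nhds (a 0 + b / (c - 1))) := by
  have hc0 : c - 1 ≠ 0 := by linarith
  have closed_form : ∀ q, a q = (a 0 + b / (c - 1)) * c ^ q - b / (c - 1) := by
    intro q
    induction q with
    | zero => simp
    | succ q ih =>
      rw [ha, ih, pow_succ]
      field_simp
      ring
  have hpow : Tendsto (fun q : ℕ => (c ^ q)⁻¹) atTop (nhds 0) :=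
    tendsto_inv_atTop_zero.comp (tendsto_pow_atTop_atTop_of_one_lt hc)
  have hlim := tendsto_const_nhds (x := a 0 + b / (c - 1)) |>.sub (hpow.const_mul (b / (c - 1)))
  rw [mul_zero, sub_zero] at hlim
  refine hlim.congr fun q => ?_
  rw [closed_form q, sub_div, mul_div_cancel_right₀ _ (by positivity), div_eq_mul_inv _ (c ^ q)]

section

variable {X : Type*} {T : X → X} {w : X → ℝ}

theorem InPeriodPart.comp {Y Z : Type*} {h : X → Y} {n : ℕ} {x : X} (φ : Y → Z)
    (hh : InPeriodPart T h n x) : InPeriodPart T (φ ∘ h) n x :=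
  fun k => congrArg φ (hh k)

theorem InPeriodPart.apply_iterate_iterate {Y : Type*} {h : X → Y} {n : ℕ} {x : X}
    (hh : InPeriodPart T h n x) (k : ℕ) : h (T^[k] (T^[n] x)) = h (T^[k] x) := by
  rw [← Function.iterate_add_apply, add_comm, Function.iterate_add_apply, hh k]

theorem cocycle_pos (hw : ∀ x, 0 < w x) (x : X) (k : ℕ) : 0 < cocycle T w x k :=
  prod_pos fun _ _ => hw _

theorem cocycle_add (x : X) (a b : ℕ) :
    cocycle T w x (a + b) = cocycle T w x a * cocycle T w (T^[a] x) b := by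
  rw [cocycle, prod_range_add]
  congr 1
  refine prod_congr rfl fun j _ => ?_
  rw [add_comm a j, Function.iterate_add_apply]

theorem wSum_pos {g : X → ℝ} (hw : ∀ x, 0 < w x) (hg : ∀ x, 0 < g x) {m : ℕ} (hm : m ≠ 0)
    (x : X) : 0 < wSum T w g m x :=
  sum_pos (fun k _ => mul_pos (hg _) (cocycle_pos hw x k)) (nonempty_range_iff.mpr hm)

variable {h : X → ℝ}

theorem wSum_add (x : X) (a b : ℕ) :
    wSum T w h (a + b) x = wSum T w h a x + cocycle T w x a * wSum T w h b (T^[a] x) := by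
  rw [wSum, sum_range_add, wSum, wSum, mul_sum]
  congr 1
  refine sum_congr rfl fun j _ => ?_
  rw [cocycle_add, add_comm a j, Function.iterate_add_apply]
  ring

variable {n : ℕ} {x : X}

theorem cocycle_iterate_of_inPeriodPart (hwp : InPeriodPart T w n x) (k : ℕ) :
    cocycle T w (T^[n] x) k = cocycle T w x k :=
  prod_congr rfl fun j _ => hwp.apply_iterate_iterate j

theorem wSum_iterate_of_inPeriodPart (hwp : InPeriodPart T w n x) (hhp : InPeriodPart T h n x)
    (m : ℕ) : wSum T w h m (T^[n] x) = wSum T w h m x := by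
  refine sum_congr rfl fun k _ => ?_
  rw [cocycle_iterate_of_inPeriodPart hwp, hhp.apply_iterate_iterate]

theorem wSum_period_add (hwp : InPeriodPart T w n x) (hhp : InPeriodPart T h n x) (m : ℕ) :
    wSum T w h (n + m) x = wSum T w h n x + cocycle T w x n * wSum T w h m x := by
  rw [wSum_add, wSum_iterate_of_inPeriodPart hwp hhp]

theorem cocycle_mul_wSum_iterate (hwp : InPeriodPart T w n x) (hhp : InPeriodPart T h n x)
    (r : ℕ) : cocycle T w x r * wSum T w h n (T^[r] x) =
      wSum T w h n x + (cocycle T w x n - 1) * wSum T w h r x := by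
  have h₁ := wSum_add (T := T) (w := w) (h := h) x r n
  rw [add_comm, wSum_period_add hwp hhp] at h₁
  linarith

theorem tendsto_wSum_div_cocycle_pow (hwp : InPeriodPart T w n x) (hhp : InPeriodPart T h n x)
    (hc : 1 < cocycle T w x n) (r : ℕ) :
    Tendsto (fun q => wSum T w h (n * q + r) x / cocycle T w x n ^ q) atTop
      (nhds (cocycle T w x r * wSum T w h n (T^[r] x) / (cocycle T w x n - 1))) := by
  have hrec : ∀ q, wSum T w h (n * (q + 1) + r) x =
      wSum T w h n x + cocycle T w x n * wSum T w h (n * q + r) x := fun q => by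
    rw [← wSum_period_add hwp hhp]
    ring_nf
  convert tendsto_div_pow_of_affine_recurrence (a := fun q => wSum T w h (n * q + r) x) hc hrec
    using 2
  rw [cocycle_mul_wSum_iterate hwp hhp, mul_zero, zero_add]
  field_simp [show cocycle T w x n - 1 ≠ 0 by linarith]
  ring

end

theorem ratio_tendsto_of_one_lt_cocycle {X : Type*} (T : X → X) (f g w : X → ℝ)
    (hg : ∀ x, 0 < g x) (hw : ∀ x, 0 < w x) (n : ℕ) (hn : 1 ≤ n) (x : X)
    (hx : InPeriodPart T (fun y => (f y, g y, w y)) n x)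
    (hcoc : 1 < cocycle T w x n) :
    ∀ r : ℕ,
      Tendsto (fun q : ℕ => ratio T w f g (n * q + r) x) atTop
        (nhds (ratio T w f g n (T^[r] x))) := by
  intro r
  have hfp : InPeriodPart T f n x := hx.comp Prod.fst
  have hgp : InPeriodPart T g n x := hx.comp fun p : ℝ × ℝ × ℝ => p.2.1
  have hwp : InPeriodPart T w n x := hx.comp fun p : ℝ × ℝ × ℝ => p.2.2
  have hc : cocycle T w x n - 1 ≠ 0 := by linarith
  have hlim := (tendsto_wSum_div_cocycle_pow hwp hfp hcoc r).div
    (tendsto_wSum_div_cocycle_pow hwp hgp hcoc r)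
    (div_ne_zero (mul_pos (cocycle_pos hw x r) (wSum_pos hw hg (by omega) _)).ne' hc)
  rw [div_div_div_cancel_right₀ hc, mul_div_mul_left _ _ (cocycle_pos hw x r).ne'] at hlim
  refine hlim.congr fun q => ?_
  exact div_div_div_cancel_right₀ (pow_pos (cocycle_pos hw x n) q).ne' _ _
end

section
/- (Local-global bridge) Let B ⊆ X be a T-bounded Borel set and μ a T-w-invariant Borel measure with f μ-integrable. Then ∫_X f dμ = ∫_B S_f^{n_B(x)}(x) dμ(x), where n_B(x) = min{n ≥ 1 : T^n x ∈ B} is the hitting time of B and S_f^m(x) = Σ_{k<m} f(T^k x) w^T(x,k). -/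
/-
Invariance says that `μ` is the push-forward under `T` of `w • μ`, so
`∫ g dμ = ∫ (g ∘ T) · w dμ` for integrable `g`. Split `∫ g dμ` into the integrals over `B` and
over `Bᶜ` and transport the latter by this identity; iterating `N` times peels off the terms
`∫_B g(T^k x) w^T(x,k) 1{k < n_B(x)} dμ` for `k < N`, plus a remainder carried by the points whose
orbit has not yet visited `B` at the times `1, …, N`. Since `B` is `T`-bounded, `n_B ≤ n + 1`
everywhere, so the remainder vanishes for `N = n + 1` and the peeled terms add up to
`∫_B S_f^{n_B(x)}(x) dμ`.
-/

open Finset MeasureTheory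

/-- Hitting time of `B`: least `n ≥ 1` with `T^[n] x ∈ B`. -/
noncomputable def hitTime {X : Type*} (T : X → X) (B : Set X) (x : X) : ℕ :=
  sInf {n : ℕ | 0 < n ∧ T^[n] x ∈ B}

def IsTWInvariant {X : Type*} [MeasurableSpace X] (T : X → X) (w : X → ℝ)
    (μ : Measure X) : Prop :=
  ∀ B : Set X, MeasurableSet B →
    μ B = ∫⁻ x in T ⁻¹' B, ENNReal.ofReal (w x) ∂μ

section

variable {X : Type*} {T : X → X} {w : X → ℝ}

theorem cocycle_succ (T : X → X) (w : X → ℝ) (x : X) (k : ℕ) :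
    cocycle T w x (k + 1) = cocycle T w (T x) k * w x := by
  simp only [cocycle, Finset.prod_range_succ', Function.iterate_succ_apply, Function.iterate_zero,
    id]

def avoidSet (T : X → X) (B : Set X) (k : ℕ) : Set X :=
  {x | ∀ j < k, T^[j + 1] x ∉ B}

theorem avoidSet_zero (T : X → X) (B : Set X) : avoidSet T B 0 = Set.univ := by
  simp [avoidSet]

theorem preimage_avoidSet_diff (T : X → X) (B : Set X) (k : ℕ) :
    T ⁻¹' (avoidSet T B k \ B) = avoidSet T B (k + 1) := by
  ext x
  simp only [avoidSet, Set.mem_preimage, Set.mem_sdiff, Set.mem_ofPred_eq, Nat.forall_lt_succ_left,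
    ← Function.iterate_succ_apply, and_comm]
  rfl

theorem mem_avoidSet_iff_lt_hitTime {B : Set X} {x : X} (hx : ∃ j, 0 < j ∧ T^[j] x ∈ B) (k : ℕ) :
    x ∈ avoidSet T B k ↔ k < hitTime T B x := by
  have hmem : 0 < hitTime T B x ∧ T^[hitTime T B x] x ∈ B := Nat.sInf_mem hx
  constructor
  · intro hxk
    by_contra! hle
    obtain ⟨j, hj⟩ := Nat.exists_eq_add_of_lt hmem.1
    exact hxk j (by omega) (by simpa [hj] using hmem.2)
  · intro hk j hj hjB
    have : hitTime T B x ≤ j + 1 := Nat.sInf_le ⟨j.succ_pos, hjB⟩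
    omega

theorem exists_pos_iterate_mem_le_succ {B : Set X} {n : ℕ} (hn : ∀ x, ∃ m ≤ n, T^[m] x ∈ B)
    (x : X) : ∃ j ≤ n + 1, 0 < j ∧ T^[j] x ∈ B := by
  obtain ⟨m, hm, hmB⟩ := hn (T x)
  exact ⟨m + 1, by omega, m.succ_pos, by rwa [Function.iterate_succ_apply]⟩

/-- `excursionTerm T w B g k x` is the `k`-th summand of `S_g^{n_B(x)}(x)`, and `0` for
`k ≥ n_B(x)`. -/
noncomputable def excursionTerm (T : X → X) (w : X → ℝ) (B : Set X) (g : X → ℝ) (k : ℕ) :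
    X → ℝ :=
  (avoidSet T B k).indicator fun x => g (T^[k] x) * cocycle T w x k

theorem excursionTerm_zero (T : X → X) (w : X → ℝ) (B : Set X) (g : X → ℝ) :
    excursionTerm T w B g 0 = g := by
  simp [excursionTerm, avoidSet_zero, cocycle]

theorem excursionTerm_succ (T : X → X) (w : X → ℝ) (B : Set X) (g : X → ℝ) (k : ℕ) (x : X) :
    excursionTerm T w B g (k + 1) x = Bᶜ.indicator (excursionTerm T w B g k) (T x) * w x := by
  rw [excursionTerm, excursionTerm, Set.indicator_indicator, ← Set.sdiff_eq_compl_inter]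
  by_cases hx : x ∈ avoidSet T B (k + 1)
  · have hTx : T x ∈ avoidSet T B k \ B := by rwa [← Set.mem_preimage, preimage_avoidSet_diff]
    rw [Set.indicator_of_mem hx, Set.indicator_of_mem hTx, cocycle_succ,
      Function.iterate_succ_apply, mul_assoc]
  · have hTx : T x ∉ avoidSet T B k \ B := by rwa [← Set.mem_preimage, preimage_avoidSet_diff]
    rw [Set.indicator_of_notMem hx, Set.indicator_of_notMem hTx, zero_mul]

theorem excursionTerm_eq_zero {B : Set X} {g : X → ℝ} {x : X} {N : ℕ}
    (hx : ∃ j, 0 < j ∧ T^[j] x ∈ B) (hN : hitTime T B x ≤ N) :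
    excursionTerm T w B g N x = 0 :=
  Set.indicator_of_notMem (by simpa [mem_avoidSet_iff_lt_hitTime hx N] using hN) _

theorem sum_excursionTerm_eq_wSum {B : Set X} {g : X → ℝ} {x : X} {N : ℕ}
    (hx : ∃ j, 0 < j ∧ T^[j] x ∈ B) (hN : hitTime T B x ≤ N) :
    ∑ k ∈ Finset.range N, excursionTerm T w B g k x = wSum T w g (hitTime T B x) x := by
  rw [wSum, ← Finset.sum_subset (Finset.range_subset_range.2 hN)]
  · refine Finset.sum_congr rfl fun k hk => Set.indicator_of_mem ?_ _
    exact (mem_avoidSet_iff_lt_hitTime hx k).2 (Finset.mem_range.1 hk)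
  · intro k _ hk
    refine Set.indicator_of_notMem ?_ _
    simpa [mem_avoidSet_iff_lt_hitTime hx k] using hk

variable [MeasurableSpace X] {μ : Measure X}

namespace IsTWInvariant

theorem map_withDensity (hμ : IsTWInvariant T w μ) (hT : Measurable T) :
    (μ.withDensity fun x => ENNReal.ofReal (w x)).map T = μ := by
  ext s hs
  rw [Measure.map_apply hT hs, withDensity_apply _ (hT hs), hμ s hs]

theorem integrable_comp_mul (hμ : IsTWInvariant T w μ) (hT : Measurable T) (hw : Measurable w)
    (hw0 : ∀ x, 0 ≤ w x) {g : X → ℝ} (hg : Integrable g μ) :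
    Integrable (fun x => g (T x) * w x) μ := by
  rw [← hμ.map_withDensity hT] at hg
  have := (integrable_withDensity_iff_integrable_smul hw.real_toNNReal).1
    (hg.comp_aemeasurable hT.aemeasurable)
  simpa [NNReal.smul_def, Real.coe_toNNReal _ (hw0 _), mul_comm] using this

theorem integral_comp_mul (hμ : IsTWInvariant T w μ) (hT : Measurable T) (hw : Measurable w)
    (hw0 : ∀ x, 0 ≤ w x) {g : X → ℝ} (hg : AEStronglyMeasurable g μ) :
    ∫ x, g x ∂μ = ∫ x, g (T x) * w x ∂μ := by
  rw [← hμ.map_withDensity hT] at hg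
  conv_lhs => rw [← hμ.map_withDensity hT]
  rw [integral_map hT.aemeasurable hg]
  simp_rw [ENNReal.ofReal]
  rw [integral_withDensity_eq_integral_smul hw.real_toNNReal]
  simp [NNReal.smul_def, Real.coe_toNNReal _ (hw0 _), mul_comm]

end IsTWInvariant

theorem integrable_excursionTerm (hμ : IsTWInvariant T w μ) (hT : Measurable T)
    (hw : Measurable w) (hw0 : ∀ x, 0 ≤ w x) {B : Set X} (hB : MeasurableSet B) {g : X → ℝ}
    (hg : Integrable g μ) (k : ℕ) :
    Integrable (excursionTerm T w B g k) μ := by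
  induction k with
  | zero => rwa [excursionTerm_zero]
  | succ k ih =>
    rw [funext (excursionTerm_succ T w B g k)]
    exact hμ.integrable_comp_mul hT hw hw0 (ih.indicator hB.compl)

theorem integral_eq_sum_add_integral_excursionTerm (hμ : IsTWInvariant T w μ)
    (hT : Measurable T) (hw : Measurable w) (hw0 : ∀ x, 0 ≤ w x) {B : Set X}
    (hB : MeasurableSet B) {g : X → ℝ} (hg : Integrable g μ) (N : ℕ) :
    ∫ x, g x ∂μ = ∑ k ∈ Finset.range N, ∫ x in B, excursionTerm T w B g k x ∂μ
      + ∫ x, excursionTerm T w B g N x ∂μ := by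
  induction N with
  | zero => simp [excursionTerm_zero]
  | succ N ih =>
    have hN := integrable_excursionTerm hμ hT hw hw0 hB hg N
    have htransport : ∫ x in Bᶜ, excursionTerm T w B g N x ∂μ
        = ∫ x, excursionTerm T w B g (N + 1) x ∂μ := by
      rw [← integral_indicator hB.compl, funext (excursionTerm_succ T w B g N),
        hμ.integral_comp_mul hT hw hw0 (hN.indicator hB.compl).aestronglyMeasurable]
    rw [ih, ← integral_add_compl hB hN, htransport, Finset.sum_range_succ, add_assoc]

end

theorem local_global_bridge_general {X : Type*} [MeasurableSpace X]
    (T : X → X) (w f : X → ℝ)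
    (hT : Measurable T) (hw : Measurable w) (hwpos : ∀ x, 0 < w x)
    (B : Set X) (hB : MeasurableSet B)
    (hbdd : ∃ n : ℕ, ∀ x : X, ∃ m ≤ n, T^[m] x ∈ B)
    (μ : Measure X) (hμ : IsTWInvariant T w μ) (hint : Integrable f μ) :
    ∫ x, f x ∂μ = ∫ x in B, wSum T w f (hitTime T B x) x ∂μ := by
  obtain ⟨n, hn⟩ := hbdd
  have hw0 : ∀ x, 0 ≤ w x := fun x => (hwpos x).le
  have hhit : ∀ x, ∃ j, 0 < j ∧ T^[j] x ∈ B := fun x =>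
    (exists_pos_iterate_mem_le_succ hn x).imp fun _ hj => hj.2
  have hle : ∀ x, hitTime T B x ≤ n + 1 := fun x => by
    obtain ⟨j, hjn, hj⟩ := exists_pos_iterate_mem_le_succ hn x
    exact (Nat.sInf_le hj).trans hjn
  have hlast : ∫ x, excursionTerm T w B f (n + 1) x ∂μ = 0 := by
    simp [excursionTerm_eq_zero (hhit _) (hle _)]
  calc ∫ x, f x ∂μ = ∑ k ∈ Finset.range (n + 1), ∫ x in B, excursionTerm T w B f k x ∂μ := by
        rw [integral_eq_sum_add_integral_excursionTerm hμ hT hw hw0 hB hint, hlast, add_zero]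
    _ = ∫ x in B, ∑ k ∈ Finset.range (n + 1), excursionTerm T w B f k x ∂μ :=
        (integral_finsetSum _ fun k _ =>
          (integrable_excursionTerm hμ hT hw hw0 hB hint k).integrableOn).symm
    _ = ∫ x in B, wSum T w f (hitTime T B x) x ∂μ :=
        integral_congr_ae (ae_of_all _ fun x => sum_excursionTerm_eq_wSum (hhit x) (hle x))

theorem local_global_bridge {X : Type*} [MeasurableSpace X]
    (T : X → X) (w f : X → ℝ)
    (hT : Measurable T) (hw : Measurable w) (hwpos : ∀ x, 0 < w x)
    (hf : Measurable f)
    (B : Set X) (hB : MeasurableSet B)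
    (hbdd : ∃ n : ℕ, ∀ x : X, ∃ m ≤ n, T^[m] x ∈ B)
    (μ : Measure X) (hμ : IsTWInvariant T w μ) (hint : Integrable f μ) :
    ∫ x, f x ∂μ = ∫ x in B, wSum T w f (hitTime T B x) x ∂μ :=
  local_global_bridge_general T w f hT hw hwpos B hB hbdd μ hμ hint
end
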